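/- arXiv:2211.10200 — 3 statements merged into one kernel-verified Lean document; each statement's English description precedes it below -/
import Mathlib

section
/- Define ψ̃ : ℝ → ℝ by ψ̃(x) = S·(1 − (x/δ)^κ) + λ₀ for x ≥ δ and ψ̃(x) = λ₀ for x < δ. Then for every ϑ and every t, λ(ϑ, t) = S·(max((t − ϑ)/δ, 0))^κ + ψ̃(t − ϑ); moreover ψ̃ is Lipschitz continuous with Lipschitz constant S·κ/δ, i.e. |ψ̃(x) − ψ̃(y)| ≤ (S·κ/δ)·|x − y| for all real x, y. -/
open MeasureTheory Real Set Filter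

/-- The cusp signal shape: `ψ(x) = (x/δ)^κ` for `0 < x < δ`, `1` for `x ≥ δ`, `0` for `x ≤ 0`. -/
noncomputable def psi (δ κ : ℝ) (x : ℝ) : ℝ :=
  if δ ≤ x then 1 else if 0 < x then (x / δ) ^ κ else 0

/-- Theoretical intensity `λ(ϑ, t) = S ψ(t − ϑ) + λ₀`. -/
noncomputable def lamT (S lam0 δ κ : ℝ) (ϑ t : ℝ) : ℝ :=
  S * psi δ κ (t - ϑ) + lam0

/-- Real intensity `λ*(ϑ₀, t) = (S + h) ψ(t − ϑ₀) + λ₀`. -/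
noncomputable def lamR (S h lam0 δ κ : ℝ) (ϑ₀ t : ℝ) : ℝ :=
  (S + h) * psi δ κ (t - ϑ₀) + lam0

/-- The Kullback–Leibler divergence `J(ϑ)`. -/
noncomputable def JKL (S h lam0 δ κ τ ϑ₀ : ℝ) (ϑ : ℝ) : ℝ :=
  ∫ t in (min ϑ ϑ₀)..τ,
    (lamT S lam0 δ κ ϑ t / lamR S h lam0 δ κ ϑ₀ t - 1 -
      Real.log (lamT S lam0 δ κ ϑ t / lamR S h lam0 δ κ ϑ₀ t)) *
      lamR S h lam0 δ κ ϑ₀ t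

/-- The Lipschitz part of the theoretical intensity. -/
noncomputable def psiTilde (S lam0 δ κ : ℝ) (x : ℝ) : ℝ :=
  if δ ≤ x then S * (1 - (x / δ) ^ κ) + lam0 else lam0

/-!
Both parts rest on rewriting the thresholds through `max`: with `u = x / δ`,
`ψ(x) = max(u, 0)^κ + (1 - max(u, 1)^κ)` and `ψ̃(x) = S (1 - max(u, 1)^κ) + λ₀`.
Since `u ↦ max(u, 1)` is `1/δ`-Lipschitz with values in `[1, ∞)`, where the concave map `u ↦ u^κ`
has slope at most `κ` (Bernoulli's inequality), `ψ̃` is `S κ / δ`-Lipschitz.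
-/

lemma rpow_sub_rpow_le_mul_sub {κ a b : ℝ} (hκ0 : 0 ≤ κ) (hκ1 : κ ≤ 1) (ha : 1 ≤ a)
    (hab : a ≤ b) : b ^ κ - a ^ κ ≤ κ * (b - a) := by
  have ha0 : 0 < a := one_pos.trans_le ha
  have hba : 0 ≤ b / a - 1 := by linarith [(one_le_div ha0).2 hab]
  have hbernoulli : (b / a) ^ κ ≤ 1 + κ * (b / a - 1) := by
    simpa using rpow_one_add_le_one_add_mul_self (s := b / a - 1) (by linarith) hκ0 hκ1
  have hscale : a ^ κ * (b / a - 1) ≤ b - a := by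
    calc a ^ κ * (b / a - 1) ≤ a * (b / a - 1) := by
          gcongr; exact rpow_le_self_of_one_le ha hκ1
      _ = b - a := by field_simp
  calc b ^ κ - a ^ κ = a ^ κ * ((b / a) ^ κ - 1) := by
        rw [div_rpow (by linarith) ha0.le, mul_sub, mul_div_cancel₀ _ (by positivity), mul_one]
    _ ≤ a ^ κ * (κ * (b / a - 1)) := by gcongr; linarith
    _ = κ * (a ^ κ * (b / a - 1)) := by ring
    _ ≤ κ * (b - a) := by gcongr

lemma abs_rpow_sub_rpow_le_mul_abs_sub {κ a b : ℝ} (hκ0 : 0 ≤ κ) (hκ1 : κ ≤ 1) (ha : 1 ≤ a)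
    (hb : 1 ≤ b) : |a ^ κ - b ^ κ| ≤ κ * |a - b| := by
  wlog hab : a ≤ b generalizing a b
  · rw [abs_sub_comm, abs_sub_comm a]
    exact this hb ha (le_of_not_ge hab)
  rw [abs_sub_comm, abs_sub_comm a, abs_of_nonneg (sub_nonneg.2 hab),
    abs_of_nonneg (sub_nonneg.2 (rpow_le_rpow (by linarith) hab hκ0))]
  exact rpow_sub_rpow_le_mul_sub hκ0 hκ1 ha hab

lemma psi_eq_max_rpow {δ κ : ℝ} (hδ : 0 < δ) (hκ : κ ≠ 0) (x : ℝ) :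
    psi δ κ x = max (x / δ) 0 ^ κ + (1 - max (x / δ) 1 ^ κ) := by
  unfold psi
  split_ifs with hδx hx
  · have : 1 ≤ x / δ := (one_le_div hδ).2 hδx
    rw [max_eq_left (by linarith), max_eq_left this]
    ring
  · rw [max_eq_left (div_pos hx hδ).le, max_eq_right ((div_lt_one hδ).2 (not_le.1 hδx)).le,
      one_rpow]
    ring
  · rw [max_eq_right (div_nonpos_of_nonpos_of_nonneg (not_lt.1 hx) hδ.le),
      max_eq_right (by linarith [(div_lt_one hδ).2 (not_le.1 hδx)]), zero_rpow hκ, one_rpow]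
    ring

lemma psiTilde_eq_max_rpow {δ : ℝ} (S lam0 κ : ℝ) (hδ : 0 < δ) (x : ℝ) :
    psiTilde S lam0 δ κ x = S * (1 - max (x / δ) 1 ^ κ) + lam0 := by
  unfold psiTilde
  split_ifs with hδx
  · rw [max_eq_left ((one_le_div hδ).2 hδx)]
  · rw [max_eq_right ((div_lt_one hδ).2 (not_le.1 hδx)).le, one_rpow]
    ring

lemma lamT_eq_max_rpow_add_psiTilde {δ κ : ℝ} (S lam0 : ℝ) (hδ : 0 < δ) (hκ : κ ≠ 0)
    (ϑ t : ℝ) :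
    lamT S lam0 δ κ ϑ t = S * max ((t - ϑ) / δ) 0 ^ κ + psiTilde S lam0 δ κ (t - ϑ) := by
  rw [lamT, psi_eq_max_rpow hδ hκ, psiTilde_eq_max_rpow S lam0 κ hδ]
  ring

lemma abs_psiTilde_sub_le {S δ κ : ℝ} (lam0 : ℝ) (hS : 0 ≤ S) (hδ : 0 < δ) (hκ0 : 0 ≤ κ)
    (hκ1 : κ ≤ 1) (x y : ℝ) :
    |psiTilde S lam0 δ κ x - psiTilde S lam0 δ κ y| ≤ S * κ / δ * |x - y| := by
  simp only [psiTilde_eq_max_rpow S lam0 κ hδ]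
  calc |S * (1 - max (x / δ) 1 ^ κ) + lam0 - (S * (1 - max (y / δ) 1 ^ κ) + lam0)|
        = |S * (max (y / δ) 1 ^ κ - max (x / δ) 1 ^ κ)| := congrArg abs (by ring)
    _ = S * |max (y / δ) 1 ^ κ - max (x / δ) 1 ^ κ| := by rw [abs_mul, abs_of_nonneg hS]
    _ ≤ S * (κ * |max (y / δ) 1 - max (x / δ) 1|) := by
          gcongr
          exact abs_rpow_sub_rpow_le_mul_abs_sub hκ0 hκ1 (le_max_right _ _) (le_max_right _ _)
    _ ≤ S * (κ * |y / δ - x / δ|) := by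
          gcongr S * (κ * ?_)
          exact abs_max_sub_max_le_abs (y / δ) (x / δ) 1
    _ = S * κ / δ * |x - y| := by
          rw [← sub_div, abs_div, abs_of_pos hδ, abs_sub_comm]
          ring

theorem stmt_14_general (S lam0 δ κ : ℝ)
    (hS : 0 < S) (hδ : 0 < δ)
    (hκ : κ ∈ Set.Ioo (0 : ℝ) (1 / 2)) :
    (∀ ϑ t : ℝ,
      lamT S lam0 δ κ ϑ t =
        S * (max ((t - ϑ) / δ) 0) ^ κ + psiTilde S lam0 δ κ (t - ϑ)) ∧
    (∀ x y : ℝ,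
      |psiTilde S lam0 δ κ x - psiTilde S lam0 δ κ y| ≤ S * κ / δ * |x - y|) :=
  ⟨lamT_eq_max_rpow_add_psiTilde S lam0 hδ hκ.1.ne',
    abs_psiTilde_sub_le lam0 hS.le hδ hκ.1.le (hκ.2.le.trans (by norm_num))⟩

theorem stmt_14 (S lam0 δ τ κ α β : ℝ)
    (hS : 0 < S) (hlam0 : 0 < lam0) (hδ : 0 < δ) (hτ : 0 < τ)
    (hκ : κ ∈ Set.Ioo (0 : ℝ) (1 / 2)) (hαβ : α < β)
    (hΘ : Set.Ioo (α - δ) (β + δ) ⊆ Set.Ioo 0 (τ - δ)) :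
    (∀ ϑ t : ℝ,
      lamT S lam0 δ κ ϑ t =
        S * (max ((t - ϑ) / δ) 0) ^ κ + psiTilde S lam0 δ κ (t - ϑ)) ∧
    (∀ x y : ℝ,
      |psiTilde S lam0 δ κ x - psiTilde S lam0 δ κ y| ≤ S * κ / δ * |x - y|) :=
  stmt_14_general S lam0 δ κ hS hδ hκ
end

section
/- For every real p ≥ 1 there exists a constant C > 0 such that ∫_{0}^{τ} |λ(ϑ₁, t) − λ(ϑ₂, t)|^{2p} dt ≤ C·|ϑ₁ − ϑ₂|^{2pκ + 1} for all ϑ₁, ϑ₂ ∈ Θ. -/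
/-!
For `h = |ϑ₁ - ϑ₂|` and `x = t - min ϑ₁ ϑ₂`, the integrand is `|S| ^ (2p)` times the `2p`-th power
of the increment `ψ x - ψ (x - h)`. Writing `ψ x = min 1 ((max x 0 / δ) ^ κ)`, this increment
vanishes for `x ≤ 0`, is at most `(h / δ) ^ κ` by κ-Hölder continuity of `y ↦ y ^ κ`, and for
`x ≥ 2h` is at most `(h / δ) ^ κ * (x / 2h) ^ (κ - 1)` by concavity. After raising to the power `2p`
the tail decays like `(x / 2h) ^ (2p (κ - 1))`, which is integrable on `(2h, ∞)` precisely because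
`2p (1 - κ) > 1` for `p ≥ 1` and `κ < 1/2`; the whole integral is then
`O((h / δ) ^ (2pκ) * h) = O(h ^ (2pκ + 1))`.
-/
open MeasureTheory Real Set Filter

section RpowIncrements

variable {κ : ℝ}

theorem rpow_sub_rpow_le_rpow_sub {a b : ℝ} (hb : 0 ≤ b) (hba : b ≤ a) (hκ0 : 0 ≤ κ)
    (hκ1 : κ ≤ 1) : a ^ κ - b ^ κ ≤ (a - b) ^ κ := by
  have := rpow_add_le_add_rpow hb (sub_nonneg.2 hba) hκ0 hκ1
  rw [add_sub_cancel] at this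
  linarith

theorem rpow_sub_rpow_le_mul_rpow {x y : ℝ} (hy : 0 < y) (hyx : y ≤ x) (hκ0 : 0 ≤ κ)
    (hκ1 : κ ≤ 1) : x ^ κ - y ^ κ ≤ κ * (x - y) * y ^ (κ - 1) := by
  have hbern := rpow_one_add_le_one_add_mul_self
    (by have := div_nonneg (sub_nonneg.2 hyx) hy.le; linarith : -1 ≤ (x - y) / y) hκ0 hκ1
  have hx : x = y * (1 + (x - y) / y) := by field_simp; ring
  calc x ^ κ - y ^ κ = y ^ κ * (1 + (x - y) / y) ^ κ - y ^ κ := by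
        rw [← mul_rpow hy.le (by positivity)]; nth_rw 1 [hx]
    _ ≤ y ^ κ * (1 + κ * ((x - y) / y)) - y ^ κ := by gcongr
    _ = κ * (x - y) * (y ^ κ / y) := by ring
    _ = κ * (x - y) * y ^ (κ - 1) := by rw [rpow_sub_one hy.ne']

end RpowIncrements

theorem Monotone.abs_comp_sub_sub_comp_sub {f : ℝ → ℝ} (hf : Monotone f) (t a b : ℝ) :
    |f (t - a) - f (t - b)| = f (t - min a b) - f (t - min a b - |a - b|) := by
  rcases le_total a b with hab | hba
  · rw [min_eq_left hab, abs_sub_comm a, abs_of_nonneg (sub_nonneg.2 hab), abs_of_nonneg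
      (sub_nonneg.2 (hf (by linarith))), sub_sub, add_sub_cancel]
  · rw [min_eq_right hba, abs_of_nonneg (sub_nonneg.2 hba), abs_sub_comm, abs_of_nonneg
      (sub_nonneg.2 (hf (by linarith))), sub_sub, add_sub_cancel]

section Psi

variable {δ κ : ℝ}

theorem psi_eq_min (hδ : 0 < δ) (hκ : 0 < κ) (x : ℝ) :
    psi δ κ x = min 1 ((max x 0 / δ) ^ κ) := by
  unfold psi
  split_ifs with hδx hx
  · rw [max_eq_left (hδ.le.trans hδx), eq_comm, min_eq_left_iff]
    exact one_le_rpow ((one_le_div hδ).2 hδx) hκ.le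
  · rw [max_eq_left hx.le, eq_comm, min_eq_right_iff]
    exact rpow_le_one (by positivity) ((div_le_one hδ).2 (not_le.1 hδx).le) hκ.le
  · rw [max_eq_right (not_lt.1 hx), zero_div, zero_rpow hκ.ne', min_eq_right zero_le_one]

theorem psi_monotone (hδ : 0 < δ) (hκ : 0 < κ) : Monotone (psi δ κ) := by
  intro x y hxy
  simp only [psi_eq_min hδ hκ]
  gcongr

theorem psi_sub_psi_sub_nonneg (hδ : 0 < δ) (hκ : 0 < κ) {h : ℝ} (hh : 0 ≤ h) (x : ℝ) :
    0 ≤ psi δ κ x - psi δ κ (x - h) :=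
  sub_nonneg.2 (psi_monotone hδ hκ (by linarith))

theorem measurable_psi (hδ : 0 < δ) (hκ : 0 < κ) : Measurable (psi δ κ) :=
  (psi_monotone hδ hκ).measurable

theorem psi_of_nonpos (hδ : 0 < δ) (hκ : 0 < κ) {x : ℝ} (hx : x ≤ 0) : psi δ κ x = 0 := by
  rw [psi_eq_min hδ hκ, max_eq_right hx, zero_div, zero_rpow hκ.ne', min_eq_right zero_le_one]

theorem psi_sub_psi_le (hδ : 0 < δ) (hκ : 0 < κ) {x y : ℝ} (hyx : y ≤ x) :
    psi δ κ x - psi δ κ y ≤ (max x 0 / δ) ^ κ - (max y 0 / δ) ^ κ := by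
  have hmono : (max y 0 / δ) ^ κ ≤ (max x 0 / δ) ^ κ := by gcongr
  have := abs_min_sub_min_le_max 1 ((max x 0 / δ) ^ κ) 1 ((max y 0 / δ) ^ κ)
  rw [sub_self, abs_zero, abs_of_nonneg (sub_nonneg.2 hmono),
    max_eq_right (sub_nonneg.2 hmono)] at this
  rw [psi_eq_min hδ hκ, psi_eq_min hδ hκ]
  exact (le_abs_self _).trans this

theorem psi_sub_psi_le_rpow (hδ : 0 < δ) (hκ0 : 0 < κ) (hκ1 : κ ≤ 1) {h : ℝ} (hh : 0 ≤ h)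
    (x : ℝ) : psi δ κ x - psi δ κ (x - h) ≤ (h / δ) ^ κ := by
  have hmax : max (x - h) 0 ≤ max x 0 := by gcongr; linarith
  calc psi δ κ x - psi δ κ (x - h)
      ≤ (max x 0 / δ) ^ κ - (max (x - h) 0 / δ) ^ κ := psi_sub_psi_le hδ hκ0 (by linarith)
    _ ≤ (max x 0 / δ - max (x - h) 0 / δ) ^ κ :=
        rpow_sub_rpow_le_rpow_sub (by positivity) (by gcongr) hκ0.le hκ1
    _ ≤ (h / δ) ^ κ := by
        rw [← sub_div]
        gcongr
        rw [sub_le_iff_le_add, max_le_iff]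
        constructor <;> [linarith [le_max_left (x - h) 0]; positivity]

theorem psi_sub_psi_le_mul_rpow (hδ : 0 < δ) (hκ0 : 0 < κ) (hκ1 : κ ≤ 1) {h x : ℝ}
    (hh : 0 < h) (hx : 2 * h ≤ x) :
    psi δ κ x - psi δ κ (x - h) ≤ (h / δ) ^ κ * (x / (2 * h)) ^ (κ - 1) := by
  have hxh : 0 < x - h := by linarith
  calc psi δ κ x - psi δ κ (x - h)
      ≤ (max x 0 / δ) ^ κ - (max (x - h) 0 / δ) ^ κ := psi_sub_psi_le hδ hκ0 (by linarith)
    _ = (x ^ κ - (x - h) ^ κ) / δ ^ κ := by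
        rw [max_eq_left (by linarith), max_eq_left hxh.le, div_rpow (by linarith) hδ.le,
          div_rpow hxh.le hδ.le, sub_div]
    _ ≤ κ * h * (x - h) ^ (κ - 1) / δ ^ κ := by
        gcongr
        simpa using rpow_sub_rpow_le_mul_rpow hxh (by linarith : x - h ≤ x) hκ0.le hκ1
    _ ≤ h * (x / 2) ^ (κ - 1) / δ ^ κ := by
        have hκh : κ * h ≤ h := mul_le_of_le_one_left hh.le hκ1
        have hpow : (x - h) ^ (κ - 1) ≤ (x / 2) ^ (κ - 1) :=
          rpow_le_rpow_of_nonpos (by linarith) (by linarith) (by linarith)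
        gcongr ?_ / _
        exact mul_le_mul hκh hpow (by positivity) hh.le
    _ = (h / δ) ^ κ * (x / (2 * h)) ^ (κ - 1) := by
        rw [div_rpow hh.le hδ.le, show x / (2 * h) = x / 2 / h by ring,
          div_rpow (by linarith) hh.le, rpow_sub_one hh.ne']
        field_simp

end Psi

theorem intervalIntegral_le_of_le_const_of_le_mul_rpow {g : ℝ → ℝ} {a M q : ℝ}
    (hgm : AEStronglyMeasurable g) (ha : 0 < a) (hq : q < -1) (hg0 : ∀ x, 0 ≤ g x)
    (hg_nonpos : ∀ x ≤ 0, g x = 0) (hg_head : ∀ x ≤ a, g x ≤ M)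
    (hg_tail : ∀ x, a < x → g x ≤ M * (x / a) ^ q) (s t : ℝ) :
    ∫ x in s..t, g x ≤ M * a * (q / (q + 1)) := by
  have hq1 : q + 1 ≠ 0 := by linarith
  have htail_eq : EqOn (fun x ↦ M * (x / a) ^ q) (fun x ↦ M / a ^ q * x ^ q) (Ioi a) :=
    fun x hx ↦ by
      simp only [div_rpow (ha.trans hx).le ha.le]
      ring
  have htail_int : IntegrableOn (fun x ↦ M * (x / a) ^ q) (Ioi a) :=
    IntegrableOn.congr_fun ((integrableOn_Ioi_rpow_of_lt hq ha).const_mul (M / a ^ q))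
      htail_eq.symm measurableSet_Ioi
  have hhead_g : IntegrableOn g (Ioc 0 a) :=
    Measure.integrableOn_of_bounded measure_Ioc_lt_top.ne hgm
      (ae_restrict_of_forall_mem measurableSet_Ioc fun x hx ↦ by
        rw [Real.norm_eq_abs, abs_of_nonneg (hg0 x)]
        exact hg_head x hx.2)
  have htail_g : IntegrableOn g (Ioi a) :=
    htail_int.mono' hgm.restrict (ae_restrict_of_forall_mem measurableSet_Ioi fun x hx ↦ by
      rw [Real.norm_eq_abs, abs_of_nonneg (hg0 x)]
      exact hg_tail x hx)
  have hg_int : Integrable g := by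
    refine (integrableOn_iff_integrable_of_support_subset fun x hx ↦ ?_).1
      (Ioc_union_Ioi_eq_Ioi ha.le ▸ hhead_g.union htail_g)
    exact not_le.1 fun h ↦ hx (hg_nonpos x h)
  calc ∫ x in s..t, g x
      ≤ ∫ x in Ioc s t, g x :=
        sub_le_self _ (setIntegral_nonneg measurableSet_Ioc fun x _ ↦ hg0 x)
    _ ≤ ∫ x, g x := setIntegral_le_integral hg_int (Eventually.of_forall hg0)
    _ = (∫ x in Ioc 0 a, g x) + ∫ x in Ioi a, g x := by
        rw [← setIntegral_union (Ioc_disjoint_Ioi le_rfl) measurableSet_Ioi hhead_g htail_g,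
          Ioc_union_Ioi_eq_Ioi ha.le,
          setIntegral_eq_integral_of_forall_compl_eq_zero (s := Ioi 0) fun x hx ↦
            hg_nonpos x (not_lt.1 hx)]
    _ ≤ (∫ x in Ioc 0 a, M) + ∫ x in Ioi a, M * (x / a) ^ q :=
        add_le_add (setIntegral_mono_on hhead_g (integrableOn_const measure_Ioc_lt_top.ne)
          measurableSet_Ioc fun x hx ↦ hg_head x hx.2)
          (setIntegral_mono_on htail_g htail_int measurableSet_Ioi hg_tail)
    _ = M * a * (q / (q + 1)) := by
        rw [setIntegral_congr_fun measurableSet_Ioi htail_eq, integral_const_mul,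
          integral_Ioi_rpow_of_lt hq ha, setIntegral_const, Real.volume_real_Ioc_of_le ha.le,
          rpow_add_one ha.ne', smul_eq_mul]
        have : a ^ q ≠ 0 := (rpow_pos_of_pos ha q).ne'
        field_simp
        ring

theorem exists_integral_psi_sub_psi_rpow_le {δ κ p : ℝ} (hδ : 0 < δ) (hκ0 : 0 < κ)
    (hκ1 : κ < 1 / 2) (hp : 1 ≤ p) :
    ∃ K > 0, ∀ h, 0 ≤ h → ∀ s t : ℝ,
      ∫ x in s..t, (psi δ κ x - psi δ κ (x - h)) ^ (2 * p) ≤ K * h ^ (2 * p * κ + 1) := by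
  set q := 2 * p * (κ - 1) with hq_def
  have hq : q < -1 := by nlinarith
  have hp0 : 0 < 2 * p := by linarith
  refine ⟨2 * (q / (q + 1)) / δ ^ (2 * p * κ),
    div_pos (mul_pos two_pos (div_pos_of_neg_of_neg (by linarith) (by linarith)))
      (rpow_pos_of_pos hδ _), fun h hh s t ↦ ?_⟩
  rcases hh.eq_or_lt with rfl | hh
  · simp [zero_rpow hp0.ne', zero_rpow (by positivity : 2 * p * κ + 1 ≠ 0)]
  have hinc_nonneg := psi_sub_psi_sub_nonneg hδ hκ0 hh.le
  have hmeas : Measurable fun x ↦ (psi δ κ x - psi δ κ (x - h)) ^ (2 * p) :=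
    ((measurable_psi hδ hκ0).sub
      ((measurable_psi hδ hκ0).comp (measurable_sub_const h))).pow_const _
  calc ∫ x in s..t, (psi δ κ x - psi δ κ (x - h)) ^ (2 * p)
      ≤ ((h / δ) ^ κ) ^ (2 * p) * (2 * h) * (q / (q + 1)) := by
        refine intervalIntegral_le_of_le_const_of_le_mul_rpow hmeas.aestronglyMeasurable
          (by positivity) hq (fun x ↦ rpow_nonneg (hinc_nonneg x) _) (fun x hx ↦ ?_)
          (fun x _ ↦ ?_) (fun x hx ↦ ?_) s t
        · rw [psi_of_nonpos hδ hκ0 hx, psi_of_nonpos hδ hκ0 (by linarith), sub_self,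
            zero_rpow hp0.ne']
        · exact rpow_le_rpow (hinc_nonneg x) (psi_sub_psi_le_rpow hδ hκ0 (by linarith) hh.le x)
            hp0.le
        · have hx0 : 0 < x := by linarith
          calc (psi δ κ x - psi δ κ (x - h)) ^ (2 * p)
              ≤ ((h / δ) ^ κ * (x / (2 * h)) ^ (κ - 1)) ^ (2 * p) :=
                rpow_le_rpow (hinc_nonneg x)
                  (psi_sub_psi_le_mul_rpow hδ hκ0 (by linarith) hh hx.le) hp0.le
            _ = ((h / δ) ^ κ) ^ (2 * p) * (x / (2 * h)) ^ q := by
                rw [mul_rpow (by positivity) (by positivity),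
                  ← rpow_mul (by positivity : (0 : ℝ) ≤ x / (2 * h)), mul_comm (κ - 1)]
    _ = 2 * (q / (q + 1)) / δ ^ (2 * p * κ) * h ^ (2 * p * κ + 1) := by
        rw [← rpow_mul (by positivity), div_rpow hh.le hδ.le, rpow_add_one hh.ne',
          show κ * (2 * p) = 2 * p * κ by ring]
        have : δ ^ (2 * p * κ) ≠ 0 := (rpow_pos_of_pos hδ _).ne'
        field_simp

theorem abs_lamT_sub_lamT {S lam0 δ κ : ℝ} (hδ : 0 < δ) (hκ : 0 < κ) (ϑ₁ ϑ₂ t : ℝ) :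
    |lamT S lam0 δ κ ϑ₁ t - lamT S lam0 δ κ ϑ₂ t| =
      |S| * (psi δ κ (t - min ϑ₁ ϑ₂) - psi δ κ (t - min ϑ₁ ϑ₂ - |ϑ₁ - ϑ₂|)) := by
  rw [lamT, lamT, add_sub_add_right_eq_sub, ← mul_sub, abs_mul,
    (psi_monotone hδ hκ).abs_comp_sub_sub_comp_sub]

theorem stmt_15_general (S lam0 δ τ κ α β : ℝ)
    (hδ : 0 < δ)
    (hκ : κ ∈ Set.Ioo (0 : ℝ) (1 / 2)) :
    ∀ p : ℝ, 1 ≤ p → ∃ C : ℝ, 0 < C ∧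
      ∀ ϑ₁ ∈ Set.Ioo (α - δ) (β + δ), ∀ ϑ₂ ∈ Set.Ioo (α - δ) (β + δ),
        (∫ t in (0 : ℝ)..τ, |lamT S lam0 δ κ ϑ₁ t - lamT S lam0 δ κ ϑ₂ t| ^ (2 * p)) ≤
          C * |ϑ₁ - ϑ₂| ^ (2 * p * κ + 1) := by
  intro p hp
  obtain ⟨K, hK, hbound⟩ := exists_integral_psi_sub_psi_rpow_le hδ hκ.1 hκ.2 hp
  refine ⟨(|S| ^ (2 * p) + 1) * K, by positivity, fun ϑ₁ _ ϑ₂ _ ↦ ?_⟩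
  set u := min ϑ₁ ϑ₂
  set h := |ϑ₁ - ϑ₂|
  have hinc_nonneg := psi_sub_psi_sub_nonneg hδ hκ.1 (abs_nonneg (ϑ₁ - ϑ₂))
  calc ∫ t in (0 : ℝ)..τ, |lamT S lam0 δ κ ϑ₁ t - lamT S lam0 δ κ ϑ₂ t| ^ (2 * p)
      = |S| ^ (2 * p) * ∫ t in (0 : ℝ)..τ, (psi δ κ (t - u) - psi δ κ (t - u - h)) ^ (2 * p) := by
        rw [← intervalIntegral.integral_const_mul]
        congr 1 with t
        rw [abs_lamT_sub_lamT hδ hκ.1, mul_rpow (abs_nonneg S) (hinc_nonneg _)]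
    _ = |S| ^ (2 * p) * ∫ x in -u..τ - u, (psi δ κ x - psi δ κ (x - h)) ^ (2 * p) := by
        rw [intervalIntegral.integral_comp_sub_right
          (fun x ↦ (psi δ κ x - psi δ κ (x - h)) ^ (2 * p)), zero_sub]
    _ ≤ |S| ^ (2 * p) * (K * h ^ (2 * p * κ + 1)) := by
        gcongr
        exact hbound h (abs_nonneg _) _ _
    _ ≤ (|S| ^ (2 * p) + 1) * K * h ^ (2 * p * κ + 1) := by
        rw [mul_assoc (|S| ^ (2 * p) + 1)]
        gcongr
        linarith

theorem stmt_15 (S lam0 δ τ κ α β : ℝ)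
    (hS : 0 < S) (hlam0 : 0 < lam0) (hδ : 0 < δ) (hτ : 0 < τ)
    (hκ : κ ∈ Set.Ioo (0 : ℝ) (1 / 2)) (hαβ : α < β)
    (hΘ : Set.Ioo (α - δ) (β + δ) ⊆ Set.Ioo 0 (τ - δ)) :
    ∀ p : ℝ, 1 ≤ p → ∃ C : ℝ, 0 < C ∧
      ∀ ϑ₁ ∈ Set.Ioo (α - δ) (β + δ), ∀ ϑ₂ ∈ Set.Ioo (α - δ) (β + δ),
        (∫ t in (0 : ℝ)..τ, |lamT S lam0 δ κ ϑ₁ t - lamT S lam0 δ κ ϑ₂ t| ^ (2 * p)) ≤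
          C * |ϑ₁ - ϑ₂| ^ (2 * p * κ + 1) :=
  stmt_15_general S lam0 δ τ κ α β hδ hκ
end

section
/- Let Γ_κ = ∫_{−∞}^{+∞} ((v − 1)₊^κ − v₊^κ)² dv, which is finite, and set H = κ + 1/2. Then for all real u₁ and u₂, ∫_{−∞}^{+∞} ((v − u₁)₊^κ − v₊^κ)·((v − u₂)₊^κ − v₊^κ) dv = (Γ_κ/2)·(|u₁|^{2H} + |u₂|^{2H} − |u₁ − u₂|^{2H}); in particular, the normalized kernel family u ↦ Γ_κ^{−1/2}·((· − u)₊^κ − (·)₊^κ) in L²(ℝ) reproduces the covariance of a fractional Brownian motion with Hurst parameter H. -/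
open MeasureTheory Real Set Filter

/-!
Write `K_u(v) = (v - u)₊^κ - v₊^κ`. Since `K_{u₁} - K_{u₂}` is the translate by `u₂` of
`K_{u₁ - u₂}`, polarization expresses `∫ K_{u₁} K_{u₂}` through the three integrals `∫ K_u²` with
`u ∈ {u₁, u₂, u₁ - u₂}`. The substitution `v ↦ u v` gives `K_u(v) = u^κ K_1(v / u)` for `u > 0`, and
a translation handles `u < 0`, so `∫ K_u² = |u|^(2κ+1) ∫ K_1²`. Finiteness of `∫ K_1²` comes from the
mean value bound `|K_1(v)| ≤ (v - 1)^(κ-1)` for `v > 1`, square integrable at infinity as `κ < 1/2`.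
-/

noncomputable def fracKernel (κ u v : ℝ) : ℝ := max (v - u) 0 ^ κ - max v 0 ^ κ

lemma continuous_fracKernel {κ : ℝ} (hκ : 0 ≤ κ) (u : ℝ) : Continuous (fracKernel κ u) := by
  have h : Continuous fun v : ℝ => max v 0 ^ κ :=
    (continuous_rpow_const hκ).comp (continuous_id.max continuous_const)
  exact (h.comp (continuous_id.sub continuous_const)).sub h

lemma fracKernel_zero (κ : ℝ) : fracKernel κ 0 = 0 := by
  ext v; simp [fracKernel]

lemma fracKernel_sub_fracKernel (κ u₁ u₂ v : ℝ) :
    fracKernel κ u₁ v - fracKernel κ u₂ v = fracKernel κ (u₁ - u₂) (v - u₂) := by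
  simp only [fracKernel, sub_sub_sub_cancel_right]

lemma fracKernel_scale {u : ℝ} (hu : 0 < u) (κ v : ℝ) :
    fracKernel κ u v = u ^ κ * fracKernel κ 1 (u⁻¹ * v) := by
  have hmax : ∀ x : ℝ, u ^ κ * max x 0 ^ κ = max (u * x) 0 ^ κ := fun x => by
    rw [← mul_rpow hu.le (le_max_right _ _), mul_max_of_nonneg _ _ hu.le, mul_zero]
  simp only [fracKernel, mul_sub, hmax, mul_one, mul_inv_cancel_left₀ hu.ne']

lemma fracKernel_sq_eq_neg_shift (κ u v : ℝ) :
    fracKernel κ u v ^ 2 = fracKernel κ (-u) (v - u) ^ 2 := by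
  have := fracKernel_sub_fracKernel κ 0 u v
  rw [fracKernel_zero, Pi.zero_apply, zero_sub, zero_sub] at this
  rw [← this, neg_sq]

lemma fracKernel_sq_of_pos {u : ℝ} (hu : 0 < u) (κ v : ℝ) :
    fracKernel κ u v ^ 2 = (u ^ κ) ^ 2 * fracKernel κ 1 (u⁻¹ * v) ^ 2 := by
  rw [fracKernel_scale hu, mul_pow]

lemma rpow_add_one_sub_rpow_le {κ x : ℝ} (hκ0 : 0 ≤ κ) (hκ1 : κ ≤ 1) (hx : 0 < x) :
    (x + 1) ^ κ - x ^ κ ≤ x ^ (κ - 1) := by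
  obtain ⟨c, ⟨hxc, -⟩, hc⟩ := exists_hasDerivAt_eq_slope (fun t : ℝ => t ^ κ)
    (fun t => κ * t ^ (κ - 1)) (lt_add_one x)
    ((continuous_rpow_const hκ0).continuousOn)
    (fun t ht => hasDerivAt_rpow_const (Or.inl (hx.trans ht.1).ne'))
  rw [add_sub_cancel_left, div_one] at hc
  have hc0 : 0 < c := hx.trans hxc
  calc (x + 1) ^ κ - x ^ κ = κ * c ^ (κ - 1) := hc.symm
    _ ≤ 1 * c ^ (κ - 1) := by gcongr
    _ ≤ x ^ (κ - 1) := by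
      rw [one_mul]; exact rpow_le_rpow_of_nonpos hx hxc.le (by linarith)

lemma abs_fracKernel_one_le {κ v : ℝ} (hκ0 : 0 ≤ κ) (hκ1 : κ ≤ 1) (hv : 1 < v) :
    |fracKernel κ 1 v| ≤ (v - 1) ^ (κ - 1) := by
  have hv' : 0 < v - 1 := by linarith
  have hmono : (v - 1) ^ κ ≤ v ^ κ := rpow_le_rpow hv'.le (by linarith) hκ0
  have := rpow_add_one_sub_rpow_le hκ0 hκ1 hv'
  rw [sub_add_cancel] at this
  rw [fracKernel, max_eq_left hv'.le, max_eq_left (by linarith), abs_sub_comm,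
    abs_of_nonneg (sub_nonneg.mpr hmono)]
  exact this

lemma integrable_fracKernel_one_sq {κ : ℝ} (hκ0 : 0 ≤ κ) (hκ1 : κ < 1 / 2) :
    Integrable fun v => fracKernel κ 1 v ^ 2 := by
  have hcont : Continuous fun v => fracKernel κ 1 v ^ 2 := (continuous_fracKernel hκ0 1).pow 2
  have hcover : Iic 0 ∪ (Icc 0 2 ∪ Ioi 2) = (univ : Set ℝ) := by
    rw [Icc_union_Ioi_eq_Ici (by norm_num), Iic_union_Ici]
  rw [← integrableOn_univ, ← hcover]
  refine (IntegrableOn.union ?_ (hcont.continuousOn.integrableOn_Icc.union ?_))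
  · refine integrableOn_zero.congr_fun (fun v (hv : v ≤ 0) => ?_) measurableSet_Iic
    simp [fracKernel, max_eq_right hv, max_eq_right (by linarith : v - 1 ≤ 0)]
  · have hdom : IntegrableOn (fun v : ℝ => (v + -1) ^ (2 * κ - 2)) (Ioi 2) :=
      integrableOn_add_rpow_Ioi_of_lt (by linarith) (by norm_num)
    refine hdom.mono' hcont.aestronglyMeasurable.restrict
      ((ae_restrict_iff' measurableSet_Ioi).mpr (ae_of_all _ fun v (hv : 2 < v) => ?_))
    have hv' : 0 ≤ v - 1 := by linarith
    rw [norm_pow, norm_eq_abs, ← sub_eq_add_neg, show 2 * κ - 2 = (κ - 1) * (2 : ℕ) by ring,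
      rpow_mul hv', rpow_natCast]
    exact pow_le_pow_left₀ (abs_nonneg _) (abs_fracKernel_one_le hκ0 (by linarith) (by linarith)) 2

lemma integrable_fracKernel_sq {κ : ℝ} (hκ0 : 0 ≤ κ) (hκ1 : κ < 1 / 2) (u : ℝ) :
    Integrable fun v => fracKernel κ u v ^ 2 := by
  wlog hu : 0 ≤ u generalizing u
  · rw [funext (fracKernel_sq_eq_neg_shift κ u)]
    exact (this (-u) (by linarith)).comp_sub_right u
  rcases hu.eq_or_lt with rfl | hu
  · simp [fracKernel_zero]
  rw [funext (fracKernel_sq_of_pos hu κ)]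
  exact ((integrable_fracKernel_one_sq hκ0 hκ1).const_mul _).comp_mul_left' (inv_ne_zero hu.ne')

lemma integral_fracKernel_sq {κ : ℝ} (hκ : 0 ≤ κ) (u : ℝ) :
    ∫ v, fracKernel κ u v ^ 2 = |u| ^ (2 * κ + 1) * ∫ v, fracKernel κ 1 v ^ 2 := by
  wlog hu : 0 ≤ u generalizing u
  · rw [funext (fracKernel_sq_eq_neg_shift κ u), integral_sub_right_eq_self
      (fun v => fracKernel κ (-u) v ^ 2) u, this (-u) (by linarith), abs_neg]
  rcases hu.eq_or_lt with rfl | hu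
  · simp [fracKernel_zero, zero_rpow (by positivity : 2 * κ + 1 ≠ 0)]
  rw [funext (fracKernel_sq_of_pos hu κ), integral_const_mul,
    Measure.integral_comp_inv_mul_left (fun v => fracKernel κ 1 v ^ 2) u, smul_eq_mul,
    ← mul_assoc, abs_of_pos hu, rpow_add hu, rpow_one, ← rpow_natCast, ← rpow_mul hu.le]
  norm_num [mul_comm]

lemma integral_fracKernel_mul_fracKernel {κ : ℝ} (hκ0 : 0 ≤ κ) (hκ1 : κ < 1 / 2) (u₁ u₂ : ℝ) :
    ∫ v, fracKernel κ u₁ v * fracKernel κ u₂ v =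
      ((∫ v, fracKernel κ u₁ v ^ 2) + (∫ v, fracKernel κ u₂ v ^ 2) -
        ∫ v, fracKernel κ (u₁ - u₂) v ^ 2) / 2 := by
  have hI := integrable_fracKernel_sq hκ0 hκ1
  have hI₁₂ : Integrable fun v => fracKernel κ u₁ v ^ 2 + fracKernel κ u₂ v ^ 2 :=
    (hI u₁).add (hI u₂)
  have hdiff : (fun v => (fracKernel κ u₁ v - fracKernel κ u₂ v) ^ 2) =
      fun v => fracKernel κ (u₁ - u₂) (v - u₂) ^ 2 := by
    simp only [fracKernel_sub_fracKernel]
  calc ∫ v, fracKernel κ u₁ v * fracKernel κ u₂ v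
      = ∫ v, (fracKernel κ u₁ v ^ 2 + fracKernel κ u₂ v ^ 2 -
          (fracKernel κ u₁ v - fracKernel κ u₂ v) ^ 2) / 2 := by
        congr 1; ext v; ring
    _ = _ := by
      rw [integral_div, integral_sub hI₁₂ (hdiff ▸ (hI _).comp_sub_right u₂),
        integral_add (hI u₁) (hI u₂), hdiff,
        integral_sub_right_eq_self (fun v => fracKernel κ (u₁ - u₂) v ^ 2)]

theorem stmt_19 (κ : ℝ) (hκ : κ ∈ Set.Ioo (0 : ℝ) (1 / 2)) :
    MeasureTheory.Integrable
      (fun v : ℝ => ((max (v - 1) 0) ^ κ - (max v 0) ^ κ) ^ 2)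
      MeasureTheory.volume ∧
    ∀ u₁ u₂ : ℝ,
      (∫ v : ℝ, ((max (v - u₁) 0) ^ κ - (max v 0) ^ κ) *
          ((max (v - u₂) 0) ^ κ - (max v 0) ^ κ)) =
        (∫ v : ℝ, ((max (v - 1) 0) ^ κ - (max v 0) ^ κ) ^ 2) / 2 *
          (|u₁| ^ (2 * (κ + 1 / 2)) + |u₂| ^ (2 * (κ + 1 / 2)) -
            |u₁ - u₂| ^ (2 * (κ + 1 / 2))) := by
  obtain ⟨hκ0, hκ1⟩ := hκ
  refine ⟨integrable_fracKernel_one_sq hκ0.le hκ1, fun u₁ u₂ => ?_⟩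
  change ∫ v, fracKernel κ u₁ v * fracKernel κ u₂ v = (∫ v, fracKernel κ 1 v ^ 2) / 2 * _
  rw [integral_fracKernel_mul_fracKernel hκ0.le hκ1, integral_fracKernel_sq hκ0.le u₁,
    integral_fracKernel_sq hκ0.le u₂, integral_fracKernel_sq hκ0.le (u₁ - u₂),
    show 2 * (κ + 1 / 2) = 2 * κ + 1 by ring]
  ring
end
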